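/- arXiv:2302.08438 — 4 statements merged into one kernel-verified Lean document; each statement's English description precedes it below -/
import Mathlib

section
/- Fix n ≥ 2 and let g₁,…,gₙ : ℂ → ℂ and f : ℂ → ℂ. Let S ⊂ ℂ be a compact set such that: each map s ↦ gᵢ(s)⁻¹ is continuous on S, the sum ∑ᵢ gᵢ(s)⁻¹ is nonzero for every s ∈ S (so that the coherent dynamics ḡ(s) := ((1/n)∑ᵢ gᵢ(s)⁻¹)⁻¹ is defined and continuous on S), and inf_{s∈S} |f(s)| > 0. Then for every ε > 0 there exists λ₀ > 0 such that for every n×n real symmetric positive semidefinite matrix L with L𝟙 = 0 satisfying x*Lx ≥ λ₀‖x‖² for every complex vector x orthogonal to 𝟙, and for every s ∈ S, the matrix diag(g₁(s)⁻¹,…,gₙ(s)⁻¹) + f(s)·L is invertible and ‖(diag(g₁(s)⁻¹,…,gₙ(s)⁻¹) + f(s)·L)⁻¹ − (1/n)ḡ(s)·𝟙𝟙ᵀ‖ ≤ ε. -/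
/-!
Write the response `w = M⁻¹ z` of `M = D + f L` as `β 𝟙 + q` with `q ⟂ 𝟙`. Since `𝟙ᵀ L = 0`, the
total input `𝟙ᵀ z` equals `𝟙ᵀ D w`, which determines `β` up to an error linear in `q`; hence
`w - (1/n) ḡ 𝟙𝟙ᵀ z` is `O(‖q‖)`, and `‖w‖` is `O(‖q‖ + ‖z‖)`. Testing `M w = z` against `q` and
using the spectral gap `q* L q ≥ λ ‖q‖²` gives `|f| λ ‖q‖ ≤ ‖z‖ + ‖D‖ ‖w‖`. By compactness of `S`,
`‖D‖`, `|∑ gᵢ⁻¹|⁻¹` and `|f|⁻¹` are bounded uniformly in `s`, so for `λ` large the deviation is at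
most `ε ‖z‖`; with `z = 0` this also gives invertibility.
-/

open Matrix Complex

/-- Spectral norm (L2 operator norm) of a complex matrix. -/
noncomputable def specNorm {n : ℕ} (A : Matrix (Fin n) (Fin n) ℂ) : ℝ :=
  ‖Matrix.toEuclideanCLM (𝕜 := ℂ) A‖

/-- The all-ones matrix. -/
def allOnes (n : ℕ) : Matrix (Fin n) (Fin n) ℂ := Matrix.of fun _ _ => 1

open scoped InnerProductSpace

section CoherenceEstimate

variable {𝕜 E : Type*} [RCLike 𝕜] [NormedAddCommGroup E] [InnerProductSpace 𝕜 E]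

/-- With `u = 𝟙` and `D = diag(gᵢ⁻¹)` this is the coherent response `(1/n) ḡ 𝟙𝟙ᵀ z`. -/
noncomputable def coherentPart (D : E →L[𝕜] E) (u z : E) : E :=
  (⟪u, z⟫_𝕜 / ⟪u, D u⟫_𝕜) • u

variable {D A : E →L[𝕜] E} {u : E} {G m : ℝ}

theorem norm_coherentPart_le (hm : 0 < m) (hσ : m ≤ ‖⟪u, D u⟫_𝕜‖) (z : E) :
    ‖coherentPart D u z‖ ≤ ‖u‖ ^ 2 / m * ‖z‖ := by
  rw [coherentPart, norm_smul, norm_div]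
  calc ‖⟪u, z⟫_𝕜‖ / ‖⟪u, D u⟫_𝕜‖ * ‖u‖ ≤ ‖u‖ * ‖z‖ / m * ‖u‖ := by
        gcongr
        exact norm_inner_le_norm u z
    _ = ‖u‖ ^ 2 / m * ‖z‖ := by ring

theorem norm_sub_coherentPart_le (hD : ‖D‖ ≤ G) (hm : 0 < m) (hσ : m ≤ ‖⟪u, D u⟫_𝕜‖)
    {w q : E} {β : 𝕜} (hw : w = β • u + q) :
    ‖w - coherentPart D u (D w)‖ ≤ (1 + G * ‖u‖ ^ 2 / m) * ‖q‖ := by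
  have hσ0 : ⟪u, D u⟫_𝕜 ≠ 0 := norm_pos_iff.1 (hm.trans_le hσ)
  have hsplit : w - coherentPart D u (D w) = q - coherentPart D u (D q) := by
    subst hw
    simp only [coherentPart, map_add, map_smul, inner_add_right, inner_smul_right, add_div,
      mul_div_cancel_right₀ _ hσ0]
    module
  calc ‖w - coherentPart D u (D w)‖ ≤ ‖q‖ + ‖u‖ ^ 2 / m * ‖D q‖ := by
        rw [hsplit]
        exact norm_sub_le_of_le le_rfl (norm_coherentPart_le hm hσ _)
    _ ≤ ‖q‖ + ‖u‖ ^ 2 / m * (G * ‖q‖) := by gcongr; exact D.le_of_opNorm_le hD q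
    _ = (1 + G * ‖u‖ ^ 2 / m) * ‖q‖ := by ring

theorem mul_norm_le_of_inner_eq_zero {μ : ℝ} (hD : ‖D‖ ≤ G) (hAu : A u = 0)
    (hA : ∀ q, ⟪u, q⟫_𝕜 = 0 → μ * ‖q‖ ^ 2 ≤ ‖⟪q, A q⟫_𝕜‖)
    {w q : E} {β : 𝕜} (hw : w = β • u + q) (hq : ⟪u, q⟫_𝕜 = 0) :
    μ * ‖q‖ ≤ ‖(D + A) w‖ + G * ‖w‖ := by
  have hG : 0 ≤ G := (norm_nonneg _).trans hD
  have hAw : A w = A q := by rw [hw, map_add, map_smul, hAu, smul_zero, zero_add]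
  have hsq : ‖q‖ * (μ * ‖q‖) ≤ ‖q‖ * (‖(D + A) w‖ + G * ‖w‖) := calc
    ‖q‖ * (μ * ‖q‖) = μ * ‖q‖ ^ 2 := by ring
    _ ≤ ‖⟪q, A q⟫_𝕜‖ := hA q hq
    _ = ‖⟪q, (D + A) w⟫_𝕜 - ⟪q, D w⟫_𝕜‖ := by
      rw [_root_.add_apply, inner_add_right, hAw, add_sub_cancel_left]
    _ ≤ ‖q‖ * ‖(D + A) w‖ + ‖q‖ * (G * ‖w‖) := by
      refine norm_sub_le_of_le (norm_inner_le_norm _ _) ((norm_inner_le_norm _ _).trans ?_)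
      gcongr
      exact D.le_of_opNorm_le hD w
    _ = ‖q‖ * (‖(D + A) w‖ + G * ‖w‖) := by ring
  rcases (norm_nonneg q).eq_or_lt with h0 | hpos
  · rw [← h0, mul_zero]
    positivity
  · exact le_of_mul_le_mul_left hsq hpos

theorem norm_sub_coherentPart_le_of_coercive {μ ε : ℝ} (hD : ‖D‖ ≤ G) (hm : 0 < m)
    (hσ : m ≤ ‖⟪u, D u⟫_𝕜‖) (hAu : A u = 0) (hAu' : ∀ x, ⟪u, A x⟫_𝕜 = 0)
    (hA : ∀ q, ⟪u, q⟫_𝕜 = 0 → μ * ‖q‖ ^ 2 ≤ ‖⟪q, A q⟫_𝕜‖) (hε : 0 < ε)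
    (hμ : G * (1 + G * ‖u‖ ^ 2 / m) + (1 + G * ‖u‖ ^ 2 / m) ^ 2 / ε ≤ μ) (w : E) :
    ‖w - coherentPart D u ((D + A) w)‖ ≤ ε * ‖(D + A) w‖ := by
  set K := 1 + G * ‖u‖ ^ 2 / m with hK
  set z := (D + A) w
  have hG : 0 ≤ G := (norm_nonneg _).trans hD
  have hK0 : 0 < K := by positivity
  have hu : ⟪u, u⟫_𝕜 ≠ 0 := by
    refine inner_self_ne_zero.2 fun hu => ?_
    simp [hu] at hσ
    linarith
  set q := w - (⟪u, w⟫_𝕜 / ⟪u, u⟫_𝕜) • u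
  have hw : w = (⟪u, w⟫_𝕜 / ⟪u, u⟫_𝕜) • u + q := (add_sub_cancel _ _).symm
  have hq : ⟪u, q⟫_𝕜 = 0 := by
    rw [inner_sub_right, inner_smul_right, div_mul_cancel₀ _ hu, sub_self]
  have hcoh : coherentPart D u z = coherentPart D u (D w) := by
    simp only [z, coherentPart, _root_.add_apply, inner_add_right, hAu', add_zero]
  have hdev : ‖w - coherentPart D u z‖ ≤ K * ‖q‖ := hcoh ▸ norm_sub_coherentPart_le hD hm hσ hw
  have hw_le : ‖w‖ ≤ K * ‖q‖ + ‖u‖ ^ 2 / m * ‖z‖ := calc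
    ‖w‖ ≤ ‖w - coherentPart D u z‖ + ‖coherentPart D u z‖ := norm_le_norm_sub_add _ _
    _ ≤ K * ‖q‖ + ‖u‖ ^ 2 / m * ‖z‖ := add_le_add hdev (norm_coherentPart_le hm hσ z)
  have hq_le : K ^ 2 / ε * ‖q‖ ≤ K * ‖z‖ := by
    have hcoer := mul_norm_le_of_inner_eq_zero hD hAu hA hw hq
    have hμq := mul_le_mul_of_nonneg_right hμ (norm_nonneg q)
    have hGw := mul_le_mul_of_nonneg_left hw_le hG
    have hKz : K * ‖z‖ = ‖z‖ + G * (‖u‖ ^ 2 / m * ‖z‖) := by rw [hK]; ring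
    linarith
  calc ‖w - coherentPart D u z‖ ≤ K * ‖q‖ := hdev
    _ = ε / K * (K ^ 2 / ε * ‖q‖) := by field_simp
    _ ≤ ε / K * (K * ‖z‖) := by gcongr
    _ = ε * ‖z‖ := by field_simp

end CoherenceEstimate

section Matrices

def onesVec (𝕜 ι : Type*) [RCLike 𝕜] : EuclideanSpace 𝕜 ι := WithLp.toLp 2 fun _ => 1

variable {𝕜 ι : Type*} [RCLike 𝕜] [Fintype ι]

theorem inner_onesVec_left (x : EuclideanSpace 𝕜 ι) : ⟪onesVec 𝕜 ι, x⟫_𝕜 = ∑ i, x i := by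
  simp [onesVec, EuclideanSpace.inner_eq_star_dotProduct, dotProduct]

theorem inner_toEuclideanCLM_self [DecidableEq ι] (A : Matrix ι ι 𝕜) (x : EuclideanSpace 𝕜 ι) :
    ⟪x, toEuclideanCLM (𝕜 := 𝕜) A x⟫_𝕜 = star (WithLp.ofLp x) ⬝ᵥ A *ᵥ WithLp.ofLp x := by
  rw [EuclideanSpace.inner_eq_star_dotProduct, ofLp_toEuclideanCLM, dotProduct_comm]

theorem inner_onesVec_toEuclideanCLM_diagonal [DecidableEq ι] (d : ι → 𝕜) :
    ⟪onesVec 𝕜 ι, toEuclideanCLM (𝕜 := 𝕜) (diagonal d) (onesVec 𝕜 ι)⟫_𝕜 = ∑ i, d i := by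
  rw [inner_onesVec_left]
  simp [onesVec, mulVec_diagonal]

theorem toEuclideanCLM_onesVec_eq_zero [DecidableEq ι] {L : Matrix ι ι 𝕜}
    (hL1 : L *ᵥ (fun _ => 1) = 0) : toEuclideanCLM (𝕜 := 𝕜) L (onesVec 𝕜 ι) = 0 := by
  simp [onesVec, hL1]

theorem inner_onesVec_toEuclideanCLM_smul_eq_zero [DecidableEq ι] {L : Matrix ι ι 𝕜}
    (hL : L.IsHermitian) (hL1 : L *ᵥ (fun _ => 1) = 0) (a : 𝕜) (x : EuclideanSpace 𝕜 ι) :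
    ⟪onesVec 𝕜 ι, toEuclideanCLM (𝕜 := 𝕜) (a • L) x⟫_𝕜 = 0 := by
  have h := (isSymmetric_toEuclideanLin_iff.2 hL) (onesVec 𝕜 ι) x
  simp only [← coe_toEuclideanCLM_eq_toEuclideanLin, ContinuousLinearMap.coe_coe,
    toEuclideanCLM_onesVec_eq_zero hL1, inner_zero_left] at h
  rw [map_smul, _root_.smul_apply, inner_smul_right, ← h, mul_zero]

theorem mul_mul_norm_sq_le_norm_inner_toEuclideanCLM_smul [DecidableEq ι] {L : Matrix ι ι 𝕜}
    {a : 𝕜} {c lam : ℝ} (hc : 0 ≤ c) (ha : c ≤ ‖a‖) {x : EuclideanSpace 𝕜 ι}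
    (hx : lam * ∑ i, ‖x i‖ ^ 2 ≤ RCLike.re (star (WithLp.ofLp x) ⬝ᵥ L *ᵥ WithLp.ofLp x)) :
    c * lam * ‖x‖ ^ 2 ≤ ‖⟪x, toEuclideanCLM (𝕜 := 𝕜) (a • L) x⟫_𝕜‖ := by
  rw [← EuclideanSpace.norm_sq_eq, ← inner_toEuclideanCLM_self] at hx
  rw [map_smul, _root_.smul_apply, inner_smul_right, norm_mul, mul_assoc]
  exact (mul_le_mul_of_nonneg_left (hx.trans (RCLike.re_le_norm _)) hc).trans
    (mul_le_mul_of_nonneg_right ha (norm_nonneg _))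

theorem map_ofReal_mulVec_eq_zero {L : Matrix ι ι ℝ} (hL1 : L *ᵥ (fun _ => 1) = 0) :
    L.map ofReal *ᵥ (fun _ => 1) = 0 := by
  ext i
  have := congrFun hL1 i
  simp only [mulVec, dotProduct, map_apply, mul_one, Pi.zero_apply] at this ⊢
  exact_mod_cast this

theorem toEuclideanCLM_allOnes {n : ℕ} (x : EuclideanSpace ℂ (Fin n)) :
    toEuclideanCLM (𝕜 := ℂ) (allOnes n) x = ⟪onesVec ℂ (Fin n), x⟫_ℂ • onesVec ℂ (Fin n) := by
  rw [inner_onesVec_left]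
  ext i
  simp [allOnes, onesVec, mulVec, dotProduct]

theorem toEuclideanCLM_smul_allOnes_eq_coherentPart {n : ℕ} {d : Fin n → ℂ} (hd : ∑ i, d i ≠ 0)
    (z : EuclideanSpace ℂ (Fin n)) :
    toEuclideanCLM (𝕜 := ℂ) (((n : ℂ)⁻¹ * ((n : ℂ)⁻¹ * ∑ i, d i)⁻¹) • allOnes n) z =
      coherentPart (toEuclideanCLM (𝕜 := ℂ) (diagonal d)) (onesVec ℂ (Fin n)) z := by
  have hn : (n : ℂ) ≠ 0 := by
    rintro h
    obtain rfl : n = 0 := by exact_mod_cast h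
    exact hd (by simp)
  rw [map_smul, _root_.smul_apply, toEuclideanCLM_allOnes, smul_smul, coherentPart,
    inner_onesVec_toEuclideanCLM_diagonal]
  congr 1
  field_simp

theorem isUnit_and_specNorm_inv_sub_le {n : ℕ} {M P : Matrix (Fin n) (Fin n) ℂ} {ε : ℝ}
    (hε : 0 ≤ ε)
    (h : ∀ w, ‖w - toEuclideanCLM (𝕜 := ℂ) P (toEuclideanCLM (𝕜 := ℂ) M w)‖ ≤
      ε * ‖toEuclideanCLM (𝕜 := ℂ) M w‖) :
    IsUnit M ∧ specNorm (M⁻¹ - P) ≤ ε := by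
  have hM : IsUnit M := by
    refine mulVec_injective_iff_isUnit.1 fun v v' hv => ?_
    have hker := h (WithLp.toLp 2 (v - v'))
    have h0 : toEuclideanCLM (𝕜 := ℂ) M (WithLp.toLp 2 (v - v')) = 0 := by
      rw [toEuclideanCLM_toLp, mulVec_sub, hv, sub_self]
      rfl
    rw [h0, map_zero, sub_zero, norm_zero, mul_zero, norm_le_zero_iff] at hker
    simpa [sub_eq_zero] using hker
  refine ⟨hM, ContinuousLinearMap.opNorm_le_bound _ hε fun z => ?_⟩
  have hMz : toEuclideanCLM (𝕜 := ℂ) M (toEuclideanCLM (𝕜 := ℂ) M⁻¹ z) = z := by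
    change (toEuclideanCLM (𝕜 := ℂ) M * toEuclideanCLM (𝕜 := ℂ) M⁻¹) z = z
    rw [← map_mul, mul_nonsing_inv _ ((isUnit_iff_isUnit_det M).1 hM), map_one]
    rfl
  simpa [hMz] using h (toEuclideanCLM (𝕜 := ℂ) M⁻¹ z)

open scoped Matrix.Norms.L2Operator in
theorem norm_toEuclideanCLM_diagonal [DecidableEq ι] (d : ι → 𝕜) :
    ‖toEuclideanCLM (𝕜 := 𝕜) (diagonal d)‖ = ‖d‖ :=
  l2_opNorm_diagonal d

end Matrices

theorem stmt_1_general {n : ℕ} (g : Fin n → ℂ → ℂ) (f : ℂ → ℂ)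
    (S : Set ℂ) (hS : IsCompact S)
    (hgcont : ∀ i, ContinuousOn (fun s => (g i s)⁻¹) S)
    (hsum : ∀ s ∈ S, ∑ i, (g i s)⁻¹ ≠ 0)
    (hf : ∃ c > 0, ∀ s ∈ S, c ≤ ‖f s‖)
    (ε : ℝ) (hε : 0 < ε) :
    ∃ lam0 > 0, ∀ L : Matrix (Fin n) (Fin n) ℝ,
      L.PosSemidef → L.mulVec (fun _ => 1) = 0 →
      (∀ x : Fin n → ℂ, (∑ i, x i = 0) →
        lam0 * ∑ i, ‖x i‖ ^ 2 ≤ (star x ⬝ᵥ (L.map (Complex.ofReal)).mulVec x).re) →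
      ∀ s ∈ S,
        IsUnit (Matrix.diagonal (fun i => (g i s)⁻¹) + f s • L.map (Complex.ofReal)) ∧
        specNorm ((Matrix.diagonal (fun i => (g i s)⁻¹) + f s • L.map (Complex.ofReal))⁻¹
            - ((n : ℂ)⁻¹ * ((n : ℂ)⁻¹ * ∑ i, (g i s)⁻¹)⁻¹) • allOnes n) ≤ ε := by
  obtain ⟨c, hc, hfc⟩ := hf
  obtain ⟨G, hG0, hG⟩ :=
    (hS.image_of_continuousOn (continuousOn_pi.2 hgcont)).isBounded.exists_pos_norm_le
  obtain ⟨m, hm, hmS⟩ := hS.exists_forall_le'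
    (continuousOn_finsetSum _ fun i _ => hgcont i).norm fun s hs => norm_pos_iff.2 (hsum s hs)
  set K := 1 + G * ‖onesVec ℂ (Fin n)‖ ^ 2 / m
  refine ⟨(G * K + K ^ 2 / ε) / c, by positivity, fun L hL hL1 hLcoer s hs => ?_⟩
  have hLc : (L.map ofReal).IsHermitian := hL.isHermitian.map _ fun _ => (conj_ofReal _).symm
  have hLc1 := map_ofReal_mulVec_eq_zero hL1
  have hD := (norm_toEuclideanCLM_diagonal _).trans_le (hG _ ⟨s, hs, rfl⟩)
  have hσ : m ≤ ‖⟪onesVec ℂ (Fin n), toEuclideanCLM (𝕜 := ℂ) (diagonal fun i => (g i s)⁻¹)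
      (onesVec ℂ (Fin n))⟫_ℂ‖ := by
    rw [inner_onesVec_toEuclideanCLM_diagonal]
    exact hmS s hs
  have hA (q) (hq : ⟪onesVec ℂ (Fin n), q⟫_ℂ = 0) : c * ((G * K + K ^ 2 / ε) / c) * ‖q‖ ^ 2 ≤
      ‖⟪q, toEuclideanCLM (𝕜 := ℂ) (f s • L.map ofReal) q⟫_ℂ‖ := by
    rw [inner_onesVec_left] at hq
    exact mul_mul_norm_sq_le_norm_inner_toEuclideanCLM_smul hc.le (hfc s hs) (hLcoer _ hq)
  refine isUnit_and_specNorm_inv_sub_le hε.le fun w => ?_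
  rw [map_add, toEuclideanCLM_smul_allOnes_eq_coherentPart (hsum s hs)]
  refine norm_sub_coherentPart_le_of_coercive hD hm hσ
    (toEuclideanCLM_onesVec_eq_zero (by rw [smul_mulVec, hLc1, smul_zero]))
    (inner_onesVec_toEuclideanCLM_smul_eq_zero hLc hLc1 _) hA hε ?_ w
  rw [mul_div_cancel₀ _ hc.ne']

/-- Theorem 2 of the paper, coherence under high network connectivity. -/
theorem stmt_1 {n : ℕ} (hn : 2 ≤ n) (g : Fin n → ℂ → ℂ) (f : ℂ → ℂ)
    (S : Set ℂ) (hS : IsCompact S)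
    (hgcont : ∀ i, ContinuousOn (fun s => (g i s)⁻¹) S)
    (hsum : ∀ s ∈ S, ∑ i, (g i s)⁻¹ ≠ 0)
    (hf : ∃ c > 0, ∀ s ∈ S, c ≤ ‖f s‖)
    (ε : ℝ) (hε : 0 < ε) :
    ∃ lam0 > 0, ∀ L : Matrix (Fin n) (Fin n) ℝ,
      L.PosSemidef → L.mulVec (fun _ => 1) = 0 →
      (∀ x : Fin n → ℂ, (∑ i, x i = 0) →
        lam0 * ∑ i, ‖x i‖ ^ 2 ≤ (star x ⬝ᵥ (L.map (Complex.ofReal)).mulVec x).re) →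
      ∀ s ∈ S,
        IsUnit (Matrix.diagonal (fun i => (g i s)⁻¹) + f s • L.map (Complex.ofReal)) ∧
        specNorm ((Matrix.diagonal (fun i => (g i s)⁻¹) + f s • L.map (Complex.ofReal))⁻¹
            - ((n : ℂ)⁻¹ * ((n : ℂ)⁻¹ * ∑ i, (g i s)⁻¹)⁻¹) • allOnes n) ≤ ε :=
  stmt_1_general g f S hS hgcont hsum hf ε hε
end

section
/- Fix n ≥ 2, let g₁,…,gₙ : ℂ → ℂ and f : ℂ → ℂ, and let L be an n×n real symmetric positive semidefinite matrix with L𝟙 = 0 for which there exists μ > 0 with x*Lx ≥ μ‖x‖² for every complex vector x orthogonal to 𝟙 (i.e. λ₂(L) > 0). Let s₀ ∈ ℂ and suppose: (i) |f(s)| → ∞ as s → s₀ through values s ≠ s₀ (s₀ is a pole of f); (ii) there exist δ, M₁, M₂ > 0 such that for all s with 0 < |s − s₀| ≤ δ one has |gᵢ(s)⁻¹| ≤ M₂ for all i, ∑ᵢ gᵢ(s)⁻¹ ≠ 0, and |ḡ(s)| ≤ M₁, where ḡ(s) := ((1/n)∑ᵢ gᵢ(s)⁻¹)⁻¹. Then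 ‖(diag(g₁(s)⁻¹,…,gₙ(s)⁻¹) + f(s)·L)⁻¹ − (1/n)ḡ(s)·𝟙𝟙ᵀ‖ → 0 as s → s₀ through values s ≠ s₀. -/
open Matrix Complex Filter Topology

/-!
Write `A = diagonal d + c • K` with `d = g⁻¹`, `c = f s`, `K = L`, let `ḡ` be the inverse of the
mean of `d` and `P = 𝟙𝟙ᵀ / n`. As `K` kills constant vectors on both sides, `A (ḡ • P) = ḡ • D P`,
so `A⁻¹ - ḡ • P = A⁻¹ N` with `N = 1 - ḡ • D P`. Here `‖N‖ ≤ 1 + M₁ M₂` because `P` is an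
orthogonal projection, and `N` maps into `𝟙ᗮ`. Since `𝟙ᵀ A = dᵀ`, `A⁻¹` maps `𝟙ᗮ` into the
hyperplane `d ⬝ᵥ x = 0`. On that hyperplane `‖x‖ ≤ (1 + M₁ M₂) ‖q‖` for the projection `q` of `x`
onto `𝟙ᗮ`, and `x* A x = x* D x + c q* K q`, so the spectral gap gives
`‖A x‖ ≥ (μ ‖c‖ / (1 + M₁ M₂)² - M₂) ‖x‖`. Hence the error is `O(1 / ‖f s‖)`.
-/

open WithLp (toLp)
open scoped Matrix.Norms.L2Operator

variable {n : ℕ}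

lemma norm_toLp_le_sqrt_mul_norm (x : Fin n → ℂ) : ‖toLp 2 x‖ ≤ √n * ‖x‖ := by
  rw [EuclideanSpace.norm_eq, ← Real.sqrt_sq (norm_nonneg x), ← Real.sqrt_mul n.cast_nonneg]
  refine Real.sqrt_le_sqrt ?_
  calc ∑ i, ‖x i‖ ^ 2 ≤ ∑ _i : Fin n, ‖x‖ ^ 2 := by
        gcongr with i; exact norm_le_pi_norm x i
    _ = n * ‖x‖ ^ 2 := by simp

lemma norm_dotProduct_le (d x : Fin n → ℂ) : ‖d ⬝ᵥ x‖ ≤ √n * ‖d‖ * ‖toLp 2 x‖ := by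
  have h : d ⬝ᵥ x = inner ℂ (toLp 2 (star d)) (toLp 2 x) := by
    rw [EuclideanSpace.inner_toLp_toLp, star_star, dotProduct_comm]
  calc ‖d ⬝ᵥ x‖ ≤ ‖toLp 2 (star d)‖ * ‖toLp 2 x‖ := h ▸ norm_inner_le_norm _ _
    _ ≤ √n * ‖d‖ * ‖toLp 2 x‖ := by
        gcongr
        simpa using norm_toLp_le_sqrt_mul_norm (star d)

lemma norm_star_dotProduct_le (x y : Fin n → ℂ) : ‖star x ⬝ᵥ y‖ ≤ ‖toLp 2 x‖ * ‖toLp 2 y‖ := by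
  rw [dotProduct_comm, ← EuclideanSpace.inner_toLp_toLp]
  exact norm_inner_le_norm _ _

lemma norm_toLp_mulVec_le (A : Matrix (Fin n) (Fin n) ℂ) (x : Fin n → ℂ) :
    ‖toLp 2 (A *ᵥ x)‖ ≤ ‖A‖ * ‖toLp 2 x‖ :=
  (toEuclideanCLM (𝕜 := ℂ) A).le_opNorm (toLp 2 x)

lemma norm_le_of_forall_norm_toLp_mulVec_le {A : Matrix (Fin n) (Fin n) ℂ} {C : ℝ} (hC : 0 ≤ C)
    (h : ∀ x, ‖toLp 2 (A *ᵥ x)‖ ≤ C * ‖toLp 2 x‖) : ‖A‖ ≤ C :=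
  (toEuclideanCLM (𝕜 := ℂ) A).opNorm_le_bound hC fun y => h y.ofLp

lemma natCast_le_norm_sum_mul {d : Fin n → ℂ} {M₁ : ℝ} (hS : ∑ i, d i ≠ 0)
    (hM₁ : ‖((n : ℂ)⁻¹ * ∑ i, d i)⁻¹‖ ≤ M₁) : (n : ℝ) ≤ ‖∑ i, d i‖ * M₁ := by
  rw [norm_inv, norm_mul, norm_inv, Complex.norm_natCast, mul_inv, inv_inv] at hM₁
  have hpos : 0 < ‖∑ i, d i‖ := norm_pos_iff.mpr hS
  calc (n : ℝ) = ‖∑ i, d i‖ * (n * ‖∑ i, d i‖⁻¹) := by field_simp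
    _ ≤ ‖∑ i, d i‖ * M₁ := by gcongr

section Coercivity

variable {K : Matrix (Fin n) (Fin n) ℂ} {d : Fin n → ℂ}

lemma star_dotProduct_mulVec_add_smul_one (hK1 : K *ᵥ 1 = 0) (h1K : 1 ᵥ* K = 0)
    (q : Fin n → ℂ) (m : ℂ) :
    star (q + m • 1) ⬝ᵥ K *ᵥ (q + m • 1) = star q ⬝ᵥ K *ᵥ q := by
  rw [mulVec_add, mulVec_smul, hK1, smul_zero, add_zero, star_add, add_dotProduct,
    star_smul, star_one, smul_dotProduct, dotProduct_mulVec 1, h1K, zero_dotProduct, smul_zero,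
    add_zero]

lemma one_dotProduct_diagonal_add_smul_mulVec (h1K : 1 ᵥ* K = 0) (c : ℂ) (x : Fin n → ℂ) :
    1 ⬝ᵥ (diagonal d + c • K) *ᵥ x = d ⬝ᵥ x := by
  rw [dotProduct_mulVec, vecMul_add, vecMul_smul, h1K, smul_zero, add_zero]
  congr 1
  ext i
  simp [vecMul_diagonal]

lemma norm_le_of_dotProduct_eq_zero {M₁ M₂ : ℝ} (hM₁ : 0 ≤ M₁) (hd : ‖d‖ ≤ M₂)
    (hS : (n : ℝ) ≤ ‖∑ i, d i‖ * M₁) {x : Fin n → ℂ} (hx : d ⬝ᵥ x = 0) (m : ℂ) :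
    ‖toLp 2 x‖ ≤ (1 + M₁ * M₂) * ‖toLp 2 (x - m • 1)‖ := by
  set q := x - m • 1
  have hmS : m * ∑ i, d i = -(d ⬝ᵥ q) := by
    simp [q, dotProduct_sub, hx, dotProduct_one]
  have hm : √n * ‖m‖ ≤ M₁ * M₂ * ‖toLp 2 q‖ := by
    rcases (norm_nonneg (∑ i, d i)).eq_or_lt with hS0 | hSpos
    · have : (n : ℝ) = 0 := by nlinarith [n.cast_nonneg (α := ℝ)]
      rw [this, Real.sqrt_zero, zero_mul]
      exact mul_nonneg (mul_nonneg hM₁ ((norm_nonneg d).trans hd)) (norm_nonneg _)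
    have key : ‖∑ i, d i‖ * (√n * ‖m‖) ≤ ‖∑ i, d i‖ * (M₁ * M₂ * ‖toLp 2 q‖) := by
      calc ‖∑ i, d i‖ * (√n * ‖m‖) = √n * ‖d ⬝ᵥ q‖ := by
            rw [← norm_neg (d ⬝ᵥ q), ← hmS, norm_mul]; ring
        _ ≤ √n * (√n * ‖d‖ * ‖toLp 2 q‖) := by gcongr; exact norm_dotProduct_le d q
        _ = n * ‖d‖ * ‖toLp 2 q‖ := by
            rw [← mul_assoc, ← mul_assoc, Real.mul_self_sqrt n.cast_nonneg]
        _ ≤ ‖∑ i, d i‖ * M₁ * M₂ * ‖toLp 2 q‖ := by gcongr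
        _ = _ := by ring
    exact le_of_mul_le_mul_left key hSpos
  calc ‖toLp 2 x‖ = ‖toLp 2 q + toLp 2 (m • 1)‖ := by simp [q]
    _ ≤ ‖toLp 2 q‖ + √n * ‖m • (1 : Fin n → ℂ)‖ :=
        norm_add_le_of_le le_rfl (norm_toLp_le_sqrt_mul_norm _)
    _ ≤ ‖toLp 2 q‖ + √n * ‖m‖ := by
        gcongr; exact (pi_norm_le_iff_of_nonneg (norm_nonneg m)).2 fun i => by simp
    _ ≤ (1 + M₁ * M₂) * ‖toLp 2 q‖ := by linarith

lemma one_dotProduct_sub_mean_smul_one (x : Fin n → ℂ) :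
    1 ⬝ᵥ (x - ((n : ℂ)⁻¹ * ∑ i, x i) • 1) = 0 := by
  rcases eq_or_ne n 0 with rfl | hn
  · simp
  · simp [dotProduct_sub, one_dotProduct]
    field_simp
    ring

lemma norm_star_dotProduct_diagonal_mulVec_le (x : Fin n → ℂ) :
    ‖star x ⬝ᵥ diagonal d *ᵥ x‖ ≤ ‖d‖ * ‖toLp 2 x‖ ^ 2 :=
  calc ‖star x ⬝ᵥ diagonal d *ᵥ x‖ ≤ ‖toLp 2 x‖ * ‖toLp 2 (diagonal d *ᵥ x)‖ :=
        norm_star_dotProduct_le x _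
    _ ≤ ‖toLp 2 x‖ * (‖d‖ * ‖toLp 2 x‖) := by
        gcongr; simpa using norm_toLp_mulVec_le (diagonal d) x
    _ = ‖d‖ * ‖toLp 2 x‖ ^ 2 := by ring

lemma mul_norm_le_norm_diagonal_add_smul_mulVec (hK1 : K *ᵥ 1 = 0) (h1K : 1 ᵥ* K = 0)
    {μ M₁ M₂ : ℝ} (hμ : 0 ≤ μ)
    (hgap : ∀ q, 1 ⬝ᵥ q = 0 → μ * ‖toLp 2 q‖ ^ 2 ≤ (star q ⬝ᵥ K *ᵥ q).re)
    (hM₁ : 0 ≤ M₁) (hd : ‖d‖ ≤ M₂) (hS : (n : ℝ) ≤ ‖∑ i, d i‖ * M₁) (c : ℂ)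
    {x : Fin n → ℂ} (hx : d ⬝ᵥ x = 0) :
    (μ / (1 + M₁ * M₂) ^ 2 * ‖c‖ - M₂) * ‖toLp 2 x‖ ≤
      ‖toLp 2 ((diagonal d + c • K) *ᵥ x)‖ := by
  set C := 1 + M₁ * M₂
  have hC : 0 < C := by have := mul_nonneg hM₁ ((norm_nonneg d).trans hd); positivity
  set q := x - ((n : ℂ)⁻¹ * ∑ i, x i) • 1
  have hxq : ‖toLp 2 x‖ ≤ C * ‖toLp 2 q‖ := norm_le_of_dotProduct_eq_zero hM₁ hd hS hx _
  have hform : star x ⬝ᵥ K *ᵥ x = star q ⬝ᵥ K *ᵥ q := by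
    simpa [q] using star_dotProduct_mulVec_add_smul_one hK1 h1K q ((n : ℂ)⁻¹ * ∑ i, x i)
  have hsplit : c * (star q ⬝ᵥ K *ᵥ q) =
      star x ⬝ᵥ (diagonal d + c • K) *ᵥ x - star x ⬝ᵥ diagonal d *ᵥ x := by
    rw [add_mulVec, dotProduct_add, smul_mulVec, dotProduct_smul, hform, smul_eq_mul]; ring
  have hlower : μ / C ^ 2 * ‖toLp 2 x‖ ^ 2 ≤ μ * ‖toLp 2 q‖ ^ 2 := by
    rw [div_mul_eq_mul_div, div_le_iff₀ (by positivity), mul_assoc, ← mul_pow, mul_comm _ C]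
    gcongr
  have hupper : ‖c‖ * (μ * ‖toLp 2 q‖ ^ 2) ≤
      ‖toLp 2 x‖ * ‖toLp 2 ((diagonal d + c • K) *ᵥ x)‖ + M₂ * ‖toLp 2 x‖ ^ 2 :=
    calc ‖c‖ * (μ * ‖toLp 2 q‖ ^ 2) ≤ ‖c * (star q ⬝ᵥ K *ᵥ q)‖ := by
          rw [norm_mul]
          gcongr
          exact (hgap q (one_dotProduct_sub_mean_smul_one x)).trans (Complex.re_le_norm _)
      _ ≤ ‖star x ⬝ᵥ (diagonal d + c • K) *ᵥ x‖ + ‖star x ⬝ᵥ diagonal d *ᵥ x‖ :=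
          hsplit ▸ norm_sub_le _ _
      _ ≤ _ := by
          gcongr
          · exact norm_star_dotProduct_le x _
          · exact (norm_star_dotProduct_diagonal_mulVec_le x).trans (by gcongr)
  have key : (μ / C ^ 2 * ‖c‖ - M₂) * ‖toLp 2 x‖ * ‖toLp 2 x‖ ≤
      ‖toLp 2 ((diagonal d + c • K) *ᵥ x)‖ * ‖toLp 2 x‖ := by
    nlinarith [mul_le_mul_of_nonneg_left hlower (norm_nonneg c)]
  rcases (norm_nonneg (toLp 2 x)).eq_or_lt with h0 | hpos
  · rw [← h0, mul_zero]; exact norm_nonneg _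
  · exact le_of_mul_le_mul_right key hpos

end Coercivity

section AllOnes

lemma allOnes_mul_allOnes : allOnes n * allOnes n = (n : ℂ) • allOnes n := by
  ext i j
  simp [allOnes, mul_apply]

lemma vecMul_allOnes (v : Fin n → ℂ) : v ᵥ* allOnes n = (∑ i, v i) • 1 := by
  ext j
  simp [allOnes, vecMul, dotProduct]

lemma mul_allOnes_eq_zero {K : Matrix (Fin n) (Fin n) ℂ} (hK1 : K *ᵥ 1 = 0) :
    K * allOnes n = 0 := by
  ext i j
  simpa [allOnes, mul_apply, mulVec, dotProduct] using congrFun hK1 i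

lemma isStarProjection_inv_smul_allOnes (hn : n ≠ 0) :
    IsStarProjection ((n : ℂ)⁻¹ • allOnes n) where
  isIdempotentElem := by
    rw [IsIdempotentElem, smul_mul_smul_comm, allOnes_mul_allOnes, smul_smul, mul_assoc,
      inv_mul_cancel₀ (Nat.cast_ne_zero.mpr hn), mul_one]
  isSelfAdjoint := by
    ext i j
    simp [allOnes]

end AllOnes

section Resolvent

variable {d : Fin n → ℂ} {g : ℂ}

lemma one_vecMul_one_sub_smul_diagonal_mul (hg : g * ((n : ℂ)⁻¹ * ∑ i, d i) = 1) :
    1 ᵥ* (1 - g • (diagonal d * ((n : ℂ)⁻¹ • allOnes n))) = 0 := by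
  rw [vecMul_sub, vecMul_one, vecMul_smul, ← vecMul_vecMul, vecMul_smul, vecMul_allOnes]
  ext j
  simp [vecMul_diagonal, hg]

lemma norm_one_sub_smul_diagonal_mul_le (hn : n ≠ 0) {M₁ M₂ : ℝ} (hg : ‖g‖ ≤ M₁)
    (hd : ‖d‖ ≤ M₂) :
    ‖1 - g • (diagonal d * ((n : ℂ)⁻¹ • allOnes n))‖ ≤ 1 + M₁ * M₂ :=
  calc _ ≤ ‖(1 : Matrix (Fin n) (Fin n) ℂ)‖ + ‖g‖ * (‖diagonal d‖ * ‖(n : ℂ)⁻¹ • allOnes n‖) :=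
        (norm_sub_le _ _).trans (by grw [norm_smul, norm_mul_le])
    _ ≤ 1 + M₁ * (M₂ * 1) := by
        gcongr
        · exact (IsStarProjection.one _).norm_le
        · exact (norm_nonneg g).trans hg
        · exact (norm_nonneg d).trans hd
        · rw [l2_opNorm_diagonal]; exact hd
        · exact (isStarProjection_inv_smul_allOnes hn).norm_le
    _ = 1 + M₁ * M₂ := by ring

end Resolvent

theorem norm_inv_diagonal_add_smul_sub_le {K : Matrix (Fin n) (Fin n) ℂ} {d : Fin n → ℂ}
    {c : ℂ} {μ M₁ M₂ : ℝ} (hK1 : K *ᵥ 1 = 0) (h1K : 1 ᵥ* K = 0) (hμ : 0 ≤ μ)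
    (hgap : ∀ q, 1 ⬝ᵥ q = 0 → μ * ‖toLp 2 q‖ ^ 2 ≤ (star q ⬝ᵥ K *ᵥ q).re)
    (hd : ‖d‖ ≤ M₂) (hS : ∑ i, d i ≠ 0) (hg : ‖((n : ℂ)⁻¹ * ∑ i, d i)⁻¹‖ ≤ M₁)
    (hc : M₂ < μ / (1 + M₁ * M₂) ^ 2 * ‖c‖) :
    ‖(diagonal d + c • K)⁻¹ - ((n : ℂ)⁻¹ * ((n : ℂ)⁻¹ * ∑ i, d i)⁻¹) • allOnes n‖ ≤
      (1 + M₁ * M₂) / (μ / (1 + M₁ * M₂) ^ 2 * ‖c‖ - M₂) := by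
  set A := diagonal d + c • K
  set β := μ / (1 + M₁ * M₂) ^ 2 * ‖c‖ - M₂
  set g := ((n : ℂ)⁻¹ * ∑ i, d i)⁻¹
  set N := 1 - g • (diagonal d * ((n : ℂ)⁻¹ • allOnes n))
  have hn : n ≠ 0 := by rintro rfl; simp at hS
  have hβ : 0 < β := sub_pos.mpr hc
  have hM₁ : 0 ≤ M₁ := (norm_nonneg _).trans hg
  have hM₂ : 0 ≤ M₂ := (norm_nonneg _).trans hd
  have hcoer : ∀ {x}, d ⬝ᵥ x = 0 → β * ‖toLp 2 x‖ ≤ ‖toLp 2 (A *ᵥ x)‖ :=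
    mul_norm_le_norm_diagonal_add_smul_mulVec hK1 h1K hμ hgap hM₁ hd
      (natCast_le_norm_sum_mul hS hg) c
  have hsum : ∀ x, 1 ⬝ᵥ A *ᵥ x = d ⬝ᵥ x := one_dotProduct_diagonal_add_smul_mulVec h1K c
  have hA : IsUnit A.det := by
    rw [isUnit_iff_ne_zero, Ne, ← exists_mulVec_eq_zero_iff]
    rintro ⟨v, hv, hAv⟩
    have hv' := hcoer (by rw [← hsum, hAv, dotProduct_zero])
    rw [hAv, WithLp.toLp_zero, norm_zero] at hv'
    exact hv (by simpa using nonpos_of_mul_nonpos_right hv' hβ)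
  have hN : (1 : Fin n → ℂ) ᵥ* N = 0 :=
    one_vecMul_one_sub_smul_diagonal_mul (inv_mul_cancel₀ (by simp [hn, hS]))
  have hres : A⁻¹ - ((n : ℂ)⁻¹ * g) • allOnes n = A⁻¹ * N := by
    have hAJ :
        A * (((n : ℂ)⁻¹ * g) • allOnes n) = g • (diagonal d * ((n : ℂ)⁻¹ • allOnes n)) := by
      simp only [A, Matrix.add_mul, Matrix.smul_mul, Matrix.mul_smul, mul_allOnes_eq_zero hK1,
        smul_zero, add_zero, smul_smul, mul_comm]
    rw [mul_sub, mul_one, ← hAJ, nonsing_inv_mul_cancel_left _ _ hA]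
  rw [hres, div_eq_mul_inv, mul_comm]
  refine norm_le_of_forall_norm_toLp_mulVec_le (by positivity) fun z => ?_
  have hAx : A *ᵥ (A⁻¹ * N) *ᵥ z = N *ᵥ z := by
    rw [mulVec_mulVec, ← mul_assoc, mul_nonsing_inv _ hA, one_mul]
  have hx := hcoer (x := (A⁻¹ * N) *ᵥ z)
    (by rw [← hsum, hAx, dotProduct_mulVec, hN, zero_dotProduct])
  rw [hAx] at hx
  calc ‖toLp 2 ((A⁻¹ * N) *ᵥ z)‖ = β⁻¹ * (β * ‖toLp 2 ((A⁻¹ * N) *ᵥ z)‖) := by field_simp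
    _ ≤ β⁻¹ * (‖N‖ * ‖toLp 2 z‖) := by grw [hx, norm_toLp_mulVec_le]
    _ ≤ β⁻¹ * (1 + M₁ * M₂) * ‖toLp 2 z‖ := by
        grw [norm_one_sub_smul_diagonal_mul_le hn hg hd, mul_assoc]

section Laplacian

variable {L : Matrix (Fin n) (Fin n) ℝ}

lemma map_ofReal_mulVec_one (hL1 : L *ᵥ 1 = 0) : L.map ofReal *ᵥ 1 = 0 := by
  ext i
  simpa [mulVec, dotProduct] using congr_arg ofReal (congrFun hL1 i)

lemma one_vecMul_map_ofReal (hL : L.IsHermitian) (hL1 : L *ᵥ 1 = 0) : 1 ᵥ* L.map ofReal = 0 := by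
  rw [← mulVec_transpose, ← transpose_map, ← conjTranspose_eq_transpose_of_trivial, hL.eq,
    map_ofReal_mulVec_one hL1]

end Laplacian

theorem stmt_2_general {n : ℕ} (g : Fin n → ℂ → ℂ) (f : ℂ → ℂ)
    (L : Matrix (Fin n) (Fin n) ℝ) (hL : L.PosSemidef)
    (hL1 : L.mulVec (fun _ => 1) = 0)
    (μ : ℝ) (hμ : 0 < μ)
    (hgap : ∀ x : Fin n → ℂ, (∑ i, x i = 0) →
      μ * ∑ i, ‖x i‖ ^ 2 ≤ (star x ⬝ᵥ (L.map (Complex.ofReal)).mulVec x).re)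
    (s₀ : ℂ)
    (hf : Tendsto (fun s => ‖f s‖) (𝓝[≠] s₀) atTop)
    (hbd : ∃ δ > 0, ∃ M₁ > 0, ∃ M₂ > 0, ∀ s : ℂ, 0 < ‖s - s₀‖ → ‖s - s₀‖ ≤ δ →
      (∀ i, ‖(g i s)⁻¹‖ ≤ M₂) ∧ (∑ i, (g i s)⁻¹ ≠ 0) ∧
        ‖((n : ℂ)⁻¹ * ∑ i, (g i s)⁻¹)⁻¹‖ ≤ M₁) :
    Tendsto (fun s =>
        specNorm ((Matrix.diagonal (fun i => (g i s)⁻¹) + f s • L.map (Complex.ofReal))⁻¹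
          - ((n : ℂ)⁻¹ * ((n : ℂ)⁻¹ * ∑ i, (g i s)⁻¹)⁻¹) • allOnes n))
      (𝓝[≠] s₀) (𝓝 0) := by
  obtain ⟨δ, hδ, M₁, hM₁, M₂, hM₂, hb⟩ := hbd
  have hgap' : ∀ q, 1 ⬝ᵥ q = 0 → μ * ‖toLp 2 q‖ ^ 2 ≤ (star q ⬝ᵥ L.map ofReal *ᵥ q).re :=
    fun q hq => by simpa [EuclideanSpace.norm_sq_eq] using hgap q (by rwa [← one_dotProduct])
  have hκ : 0 < μ / (1 + M₁ * M₂) ^ 2 := div_pos hμ (pow_pos (by nlinarith [mul_pos hM₁ hM₂]) 2)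
  have hβ : Tendsto (fun s => μ / (1 + M₁ * M₂) ^ 2 * ‖f s‖ - M₂) (𝓝[≠] s₀) atTop := by
    simpa [sub_eq_add_neg] using tendsto_atTop_add_const_right _ (-M₂) (hf.const_mul_atTop hκ)
  refine squeeze_zero' (.of_forall fun s => norm_nonneg _) ?_
    ((tendsto_const_nhds (x := 1 + M₁ * M₂)).div_atTop hβ)
  filter_upwards [hβ.eventually_gt_atTop 0, self_mem_nhdsWithin,
    nhdsWithin_le_nhds (Metric.closedBall_mem_nhds s₀ hδ)] with s hs hne hball
  obtain ⟨hd, hS, hg⟩ :=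
    hb s (norm_pos_iff.mpr (sub_ne_zero.mpr hne)) (by rwa [← dist_eq_norm])
  exact norm_inv_diagonal_add_smul_sub_le (map_ofReal_mulVec_one hL1)
    (one_vecMul_map_ofReal hL.1 hL1) hμ.le hgap' ((pi_norm_le_iff_of_nonneg hM₂.le).2 hd) hS hg
    (sub_pos.mp hs)

/-- Theorem 3 of the paper, coherence under high gain in coupling dynamics. -/
theorem stmt_2 {n : ℕ} (hn : 2 ≤ n) (g : Fin n → ℂ → ℂ) (f : ℂ → ℂ)
    (L : Matrix (Fin n) (Fin n) ℝ) (hL : L.PosSemidef)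
    (hL1 : L.mulVec (fun _ => 1) = 0)
    (μ : ℝ) (hμ : 0 < μ)
    (hgap : ∀ x : Fin n → ℂ, (∑ i, x i = 0) →
      μ * ∑ i, ‖x i‖ ^ 2 ≤ (star x ⬝ᵥ (L.map (Complex.ofReal)).mulVec x).re)
    (s₀ : ℂ)
    (hf : Tendsto (fun s => ‖f s‖) (𝓝[≠] s₀) atTop)
    (hbd : ∃ δ > 0, ∃ M₁ > 0, ∃ M₂ > 0, ∀ s : ℂ, 0 < ‖s - s₀‖ → ‖s - s₀‖ ≤ δ →
      (∀ i, ‖(g i s)⁻¹‖ ≤ M₂) ∧ (∑ i, (g i s)⁻¹ ≠ 0) ∧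
        ‖((n : ℂ)⁻¹ * ∑ i, (g i s)⁻¹)⁻¹‖ ≤ M₁) :
    Tendsto (fun s =>
        specNorm ((Matrix.diagonal (fun i => (g i s)⁻¹) + f s • L.map (Complex.ofReal))⁻¹
          - ((n : ℂ)⁻¹ * ((n : ℂ)⁻¹ * ∑ i, (g i s)⁻¹)⁻¹) • allOnes n))
      (𝓝[≠] s₀) (𝓝 0) :=
  stmt_2_general g f L hL hL1 μ hμ hgap s₀ hf hbd
end

section
/- Let g₁, g₂, … : ℂ → ℂ be a sequence of functions and f : ℂ → ℂ. For each n ≥ 2 let Lₙ be an n×n real symmetric positive semidefinite matrix with Lₙ𝟙 = 0, and let λₙ ≥ 0 satisfy x*Lₙx ≥ λₙ‖x‖² for every complex vector x ∈ ℂⁿ orthogonal to 𝟙, with λₙ → ∞ as n → ∞. Let S ⊂ ℂ be compact and suppose: (i) there is M₂ > 0 with |gᵢ(s)⁻¹| ≤ M₂ for all i and all s ∈ S (uniform boundedness of the gᵢ⁻¹ on S); (ii) there is M₁ > 0 such that for all n and all s ∈ S, ∑_{i=1}^n gᵢ(s)⁻¹ ≠ 0 and |ḡₙ(s)| ≤ M₁,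 where ḡₙ(s) := ((1/n)∑_{i=1}^n gᵢ(s)⁻¹)⁻¹ (uniform boundedness of the ḡₙ on S); (iii) inf_{s∈S}|f(s)| > 0. Then for every ε > 0 there exists N such that for all n ≥ N and all s ∈ S, the matrix Tₙ(s) := (diag(g₁(s)⁻¹,…,gₙ(s)⁻¹) + f(s)·Lₙ)⁻¹ is well defined (the matrix being inverted is invertible) and ‖Tₙ(s) − (1/n)ḡₙ(s)·𝟙𝟙ᵀ‖ ≤ ε. -/
open Matrix Complex Filter Topology

/-!
Write `A = D + f L` with `D = diag(gᵢ⁻¹)`, let `σ = ∑ gᵢ⁻¹` and split `x = m 𝟙 + y` with `y ⟂ 𝟙`.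
Since `L 𝟙 = 0` and `𝟙ᵀ L = 0`, the Laplacian vanishes from `𝟙ᵀ A x = m σ + 𝟙ᵀ D y`, so `m` is
recovered from `A x` up to an error of order `‖y‖`; pairing `A x` with `y` gives
`|f| λ ‖y‖² ≤ ‖y‖ (‖A x‖ + M₂ ‖x‖)`. Together they give `‖y‖ = O(‖A x‖ / λ)`, hence
`‖x - σ⁻¹ (𝟙ᵀ A x) 𝟙‖ = O(‖A x‖ / λ)`: `A` is injective and `A⁻¹` lies within `O(1 / λ)` of
`σ⁻¹ 𝟙𝟙ᵀ = n⁻¹ ḡₙ 𝟙𝟙ᵀ`.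
-/

open scoped InnerProductSpace

section Coercive

variable {𝕜 E : Type*} [RCLike 𝕜] [NormedAddCommGroup E] [InnerProductSpace 𝕜 E]

theorem exists_eq_smul_add_inner_eq_zero (u x : E) :
    ∃ (m : 𝕜) (y : E), x = m • u + y ∧ ⟪u, y⟫_𝕜 = 0 := by
  obtain ⟨v, hv, y, hy, rfl⟩ := (𝕜 ∙ u).exists_add_mem_mem_orthogonal x
  obtain ⟨m, rfl⟩ := Submodule.mem_span_singleton.mp hv
  exact ⟨m, y, rfl, Submodule.mem_orthogonal_singleton_iff_inner_right.mp hy⟩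

theorem norm_smul_inner_le {u : E} {σ : 𝕜} {M : ℝ} (h : ‖σ⁻¹‖ * ‖u‖ ^ 2 ≤ M) (v : E) :
    ‖(σ⁻¹ * ⟪u, v⟫_𝕜) • u‖ ≤ M * ‖v‖ :=
  calc ‖(σ⁻¹ * ⟪u, v⟫_𝕜) • u‖ = ‖σ⁻¹‖ * ‖⟪u, v⟫_𝕜‖ * ‖u‖ := by rw [norm_smul, norm_mul]
    _ ≤ ‖σ⁻¹‖ * (‖u‖ * ‖v‖) * ‖u‖ := by gcongr; exact norm_inner_le_norm u v
    _ = ‖σ⁻¹‖ * ‖u‖ ^ 2 * ‖v‖ := by ring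
    _ ≤ M * ‖v‖ := by gcongr

theorem mul_norm_le_of_coercive {D K : E →L[𝕜] E} {u y : E} {κ : ℝ} (hKu : K u = 0)
    (hK : ∀ y, ⟪u, y⟫_𝕜 = 0 → κ * ‖y‖ ^ 2 ≤ ‖⟪y, K y⟫_𝕜‖) (hy : ⟪u, y⟫_𝕜 = 0) (m : 𝕜) :
    κ * ‖y‖ ≤ ‖(D + K) (m • u + y)‖ + ‖D‖ * ‖m • u + y‖ := by
  set x := m • u + y
  have hKy : ⟪y, K y⟫_𝕜 = ⟪y, (D + K) x - D x⟫_𝕜 := by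
    simp [x, map_add, map_smul, hKu]
  have hsq : κ * ‖y‖ * ‖y‖ ≤ (‖(D + K) x‖ + ‖D‖ * ‖x‖) * ‖y‖ :=
    calc κ * ‖y‖ * ‖y‖ = κ * ‖y‖ ^ 2 := by ring
      _ ≤ ‖⟪y, (D + K) x - D x⟫_𝕜‖ := hKy ▸ hK y hy
      _ ≤ ‖y‖ * ‖(D + K) x - D x‖ := norm_inner_le_norm _ _
      _ ≤ ‖y‖ * (‖(D + K) x‖ + ‖D‖ * ‖x‖) := by
        gcongr; exact (norm_sub_le _ _).trans (by gcongr; exact D.le_opNorm x)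
      _ = _ := by ring
  rcases (norm_nonneg y).eq_or_lt with hy0 | hy0
  · rw [← hy0, mul_zero]; positivity
  · exact le_of_mul_le_mul_right hsq hy0

theorem norm_sub_smul_inner_le_of_coercive {D K : E →L[𝕜] E} {u : E} {M₁ M₂ κ : ℝ}
    (hD : ‖D‖ ≤ M₂) (hσ0 : ⟪u, D u⟫_𝕜 ≠ 0) (hσ : ‖(⟪u, D u⟫_𝕜)⁻¹‖ * ‖u‖ ^ 2 ≤ M₁)
    (hKu : K u = 0) (hKu' : ∀ v, ⟪u, K v⟫_𝕜 = 0)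
    (hK : ∀ y, ⟪u, y⟫_𝕜 = 0 → κ * ‖y‖ ^ 2 ≤ ‖⟪y, K y⟫_𝕜‖)
    (hκ : 2 * M₂ * (1 + M₁ * M₂) < κ) (x : E) :
    ‖x - ((⟪u, D u⟫_𝕜)⁻¹ * ⟪u, (D + K) x⟫_𝕜) • u‖ ≤
      2 * (1 + M₁ * M₂) ^ 2 / κ * ‖(D + K) x‖ := by
  set σ := ⟪u, D u⟫_𝕜
  set z := (D + K) x
  have hM₂ : 0 ≤ M₂ := (norm_nonneg _).trans hD
  have hM₁ : 0 ≤ M₁ := le_trans (by positivity) hσ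
  have hκ0 : 0 < κ := lt_of_le_of_lt (by positivity) hκ
  obtain ⟨m, y, rfl, hy⟩ := exists_eq_smul_add_inner_eq_zero (𝕜 := 𝕜) u x
  set w := (σ⁻¹ * ⟪u, D y⟫_𝕜) • u
  have hw : ‖w‖ ≤ M₁ * M₂ * ‖y‖ :=
    calc ‖w‖ ≤ M₁ * ‖D y‖ := norm_smul_inner_le hσ _
      _ ≤ M₁ * (M₂ * ‖y‖) := by gcongr; exact D.le_of_opNorm_le hD y
      _ = M₁ * M₂ * ‖y‖ := by ring
  -- `K` drops out of `⟪u, z⟫`, so `m` is read off `z` up to the error `w`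
  have hdecomp : m • u + y - (σ⁻¹ * ⟪u, z⟫_𝕜) • u = y - w := by
    have hz : ⟪u, z⟫_𝕜 = m * σ + ⟪u, D y⟫_𝕜 := by
      simp [z, σ, hKu', inner_add_right, inner_smul_right]
    rw [hz, mul_add, ← mul_assoc, mul_comm σ⁻¹ m, mul_assoc, inv_mul_cancel₀ hσ0, mul_one,
      add_smul]
    abel
  have hxy : ‖m • u + y‖ ≤ M₁ * ‖z‖ + (1 + M₁ * M₂) * ‖y‖ :=
    calc ‖m • u + y‖ = ‖(σ⁻¹ * ⟪u, z⟫_𝕜) • u + (y - w)‖ := by rw [← hdecomp]; abel_nf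
      _ ≤ M₁ * ‖z‖ + (‖y‖ + ‖w‖) :=
        (norm_add_le _ _).trans (add_le_add (norm_smul_inner_le hσ _) (norm_sub_le _ _))
      _ ≤ M₁ * ‖z‖ + (1 + M₁ * M₂) * ‖y‖ := by linarith
  have hy_le : ‖y‖ ≤ 2 * (1 + M₁ * M₂) / κ * ‖z‖ := by
    have hcoer := mul_norm_le_of_coercive (D := D) hKu hK hy m
    have hDx : ‖D‖ * ‖m • u + y‖ ≤ M₂ * (M₁ * ‖z‖ + (1 + M₁ * M₂) * ‖y‖) :=
      mul_le_mul hD hxy (norm_nonneg _) hM₂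
    have hκy := mul_le_mul_of_nonneg_right hκ.le (norm_nonneg y)
    rw [div_mul_eq_mul_div, le_div_iff₀ hκ0]
    linarith
  calc ‖m • u + y - (σ⁻¹ * ⟪u, z⟫_𝕜) • u‖ = ‖y - w‖ := by rw [hdecomp]
    _ ≤ (1 + M₁ * M₂) * ‖y‖ := by linarith [norm_sub_le y w]
    _ ≤ (1 + M₁ * M₂) * (2 * (1 + M₁ * M₂) / κ * ‖z‖) := by gcongr
    _ = 2 * (1 + M₁ * M₂) ^ 2 / κ * ‖z‖ := by ring

end Coercive

section EuclideanSpace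

variable {ι 𝕜 : Type*} [Fintype ι] [RCLike 𝕜]

theorem inner_toLp_one_left (v : EuclideanSpace 𝕜 ι) :
    ⟪WithLp.toLp 2 1, v⟫_𝕜 = ∑ i, v i := by
  simp [EuclideanSpace.inner_eq_star_dotProduct, dotProduct]

theorem norm_toLp_one_sq : ‖(WithLp.toLp 2 1 : EuclideanSpace 𝕜 ι)‖ ^ 2 = Fintype.card ι := by
  simp [EuclideanSpace.norm_sq_eq]

variable [DecidableEq ι]

theorem toEuclideanCLM_of_one_apply (v : EuclideanSpace 𝕜 ι) :
    toEuclideanCLM (𝕜 := 𝕜) (of fun _ _ : ι => 1) v =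
      ⟪WithLp.toLp 2 1, v⟫_𝕜 • WithLp.toLp 2 1 := by
  ext i
  simp [inner_toLp_one_left, mulVec, dotProduct]

theorem inner_toLp_one_toEuclideanCLM_diagonal (d : ι → 𝕜) :
    ⟪WithLp.toLp 2 1, toEuclideanCLM (𝕜 := 𝕜) (diagonal d) (WithLp.toLp 2 1)⟫_𝕜 = ∑ i, d i := by
  simp [inner_toLp_one_left, mulVec_diagonal]

open scoped Matrix.Norms.L2Operator in
theorem norm_toEuclideanCLM_diagonal_le {d : ι → 𝕜} {M : ℝ} (hM : 0 ≤ M)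
    (hd : ∀ i, ‖d i‖ ≤ M) : ‖toEuclideanCLM (𝕜 := 𝕜) (diagonal d)‖ ≤ M := by
  rw [l2_opNorm_toEuclideanCLM, l2_opNorm_diagonal]
  exact (pi_norm_le_iff_of_nonneg hM).mpr hd

theorem isUnit_and_norm_toEuclideanCLM_inv_sub_le {A P : Matrix ι ι 𝕜} {C : ℝ} (hC : 0 ≤ C)
    (h : ∀ x, ‖x - toEuclideanCLM (𝕜 := 𝕜) P (toEuclideanCLM (𝕜 := 𝕜) A x)‖ ≤
      C * ‖toEuclideanCLM (𝕜 := 𝕜) A x‖) :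
    IsUnit A ∧ ‖toEuclideanCLM (𝕜 := 𝕜) (A⁻¹ - P)‖ ≤ C := by
  have hinj : Function.Injective A.mulVec := fun x y hxy => by
    simpa [mulVec_sub, hxy, sub_eq_zero] using h (WithLp.toLp 2 (x - y))
  have hA : IsUnit A := mulVec_injective_iff_isUnit.mp hinj
  refine ⟨hA, ContinuousLinearMap.opNorm_le_bound _ hC fun v => ?_⟩
  have hv : toEuclideanCLM (𝕜 := 𝕜) A (toEuclideanCLM (𝕜 := 𝕜) A⁻¹ v) = v := by
    ext i
    simp [mulVec_mulVec, mul_nonsing_inv _ ((isUnit_iff_isUnit_det A).mp hA)]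
  simpa [map_sub, hv] using h (toEuclideanCLM (𝕜 := 𝕜) A⁻¹ v)

end EuclideanSpace

section Laplacian

variable {ι : Type*} [Fintype ι] [DecidableEq ι] {L : Matrix ι ι ℝ}

theorem toEuclideanCLM_map_ofReal_toLp_one (hL1 : L *ᵥ 1 = 0) :
    toEuclideanCLM (𝕜 := ℂ) (L.map ofReal) (WithLp.toLp 2 1) = 0 := by
  ext i
  simpa [mulVec, dotProduct] using congrArg ofReal (congrFun hL1 i)

theorem inner_toLp_one_toEuclideanCLM_map_ofReal (hL : L.IsHermitian) (hL1 : L *ᵥ 1 = 0)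
    (v : EuclideanSpace ℂ ι) :
    ⟪WithLp.toLp 2 1, toEuclideanCLM (𝕜 := ℂ) (L.map ofReal) v⟫_ℂ = 0 := by
  have hT : IsSelfAdjoint (toEuclideanCLM (𝕜 := ℂ) (L.map ofReal)) :=
    IsSelfAdjoint.map (hL.map ofReal fun _ => (conj_ofReal _).symm) _
  rw [← hT.isSymmetric.apply_clm, toEuclideanCLM_map_ofReal_toLp_one hL1, inner_zero_left]

theorem coercive_smul_toEuclideanCLM_map_ofReal {lam c : ℝ} {f : ℂ}
    (hgap : ∀ x : ι → ℂ, ∑ i, x i = 0 →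
      lam * ∑ i, ‖x i‖ ^ 2 ≤ (star x ⬝ᵥ (L.map ofReal) *ᵥ x).re)
    (hc : 0 ≤ c) (hcf : c ≤ ‖f‖) (y : EuclideanSpace ℂ ι) (hy : ⟪WithLp.toLp 2 1, y⟫_ℂ = 0) :
    c * lam * ‖y‖ ^ 2 ≤ ‖⟪y, (f • toEuclideanCLM (𝕜 := ℂ) (L.map ofReal)) y⟫_ℂ‖ := by
  set q := star y.ofLp ⬝ᵥ (L.map ofReal) *ᵥ y.ofLp
  have hq : ⟪y, (f • toEuclideanCLM (𝕜 := ℂ) (L.map ofReal)) y⟫_ℂ = f * q := by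
    simp [q, EuclideanSpace.inner_eq_star_dotProduct, dotProduct_comm]
  have hlam : lam * ‖y‖ ^ 2 ≤ q.re := by
    rw [EuclideanSpace.norm_sq_eq]
    exact hgap y.ofLp (by rwa [inner_toLp_one_left] at hy)
  calc c * lam * ‖y‖ ^ 2 ≤ c * ‖q‖ := by
        rw [mul_assoc]; gcongr; exact hlam.trans (re_le_norm q)
    _ ≤ ‖f * q‖ := by rw [norm_mul]; gcongr
    _ = _ := by rw [hq]

theorem norm_sub_toEuclideanCLM_le_of_laplacian {d : ι → ℂ} {f : ℂ} {lam c M₁ M₂ : ℝ}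
    (hL : L.IsHermitian) (hL1 : L *ᵥ 1 = 0)
    (hgap : ∀ x : ι → ℂ, ∑ i, x i = 0 →
      lam * ∑ i, ‖x i‖ ^ 2 ≤ (star x ⬝ᵥ (L.map ofReal) *ᵥ x).re)
    (hM₂ : 0 ≤ M₂) (hd : ∀ i, ‖d i‖ ≤ M₂)
    (hσ0 : ∑ i, d i ≠ 0) (hσ : ‖(∑ i, d i)⁻¹‖ * Fintype.card ι ≤ M₁)
    (hc : 0 ≤ c) (hcf : c ≤ ‖f‖) (hκ : 2 * M₂ * (1 + M₁ * M₂) < c * lam)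
    (x : EuclideanSpace ℂ ι) :
    ‖x - toEuclideanCLM (𝕜 := ℂ) ((∑ i, d i)⁻¹ • of fun _ _ => 1)
        (toEuclideanCLM (𝕜 := ℂ) (diagonal d + f • L.map ofReal) x)‖ ≤
      2 * (1 + M₁ * M₂) ^ 2 / (c * lam) *
        ‖toEuclideanCLM (𝕜 := ℂ) (diagonal d + f • L.map ofReal) x‖ := by
  have hσu := inner_toLp_one_toEuclideanCLM_diagonal d
  rw [map_add, map_smul, ← hσu, map_smul, _root_.smul_apply, toEuclideanCLM_of_one_apply,
    smul_smul]
  refine norm_sub_smul_inner_le_of_coercive (D := toEuclideanCLM (𝕜 := ℂ) (diagonal d))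
    (K := f • toEuclideanCLM (𝕜 := ℂ) (L.map ofReal)) (u := WithLp.toLp 2 1)
    (norm_toEuclideanCLM_diagonal_le hM₂ hd) (by rwa [hσu]) (by rwa [hσu, norm_toLp_one_sq])
    ?_ ?_ (coercive_smul_toEuclideanCLM_map_ofReal hgap hc hcf) hκ x
  · simp [toEuclideanCLM_map_ofReal_toLp_one hL1]
  · simp [inner_smul_right, inner_toLp_one_toEuclideanCLM_map_ofReal hL hL1]

end Laplacian

theorem stmt_4_general (g : ℕ → ℂ → ℂ) (f : ℂ → ℂ)
    (L : (n : ℕ) → Matrix (Fin n) (Fin n) ℝ) (lam : ℕ → ℝ)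
    (hL : ∀ n, 2 ≤ n → (L n).PosSemidef)
    (hL1 : ∀ n, 2 ≤ n → (L n).mulVec (fun _ => 1) = 0)
    (hgap : ∀ n, 2 ≤ n → ∀ x : Fin n → ℂ, (∑ i, x i = 0) →
      lam n * ∑ i, ‖x i‖ ^ 2 ≤ (star x ⬝ᵥ ((L n).map (Complex.ofReal)).mulVec x).re)
    (hlam : Tendsto lam atTop atTop)
    (S : Set ℂ)
    (M₂ : ℝ) (hM₂ : 0 < M₂) (hg : ∀ (i : ℕ), ∀ s ∈ S, ‖(g i s)⁻¹‖ ≤ M₂)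
    (M₁ : ℝ)
    (hgbar : ∀ n : ℕ, 1 ≤ n → ∀ s ∈ S,
      (∑ i ∈ Finset.range n, (g i s)⁻¹ ≠ 0) ∧
      ‖((n : ℂ)⁻¹ * ∑ i ∈ Finset.range n, (g i s)⁻¹)⁻¹‖ ≤ M₁)
    (hf : ∃ c > 0, ∀ s ∈ S, c ≤ ‖f s‖)
    (ε : ℝ) (hε : 0 < ε) :
    ∃ N : ℕ, ∀ n, N ≤ n → ∀ s ∈ S,
      IsUnit (Matrix.diagonal (fun i : Fin n => (g i.1 s)⁻¹) + f s • (L n).map (Complex.ofReal)) ∧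
      specNorm ((Matrix.diagonal (fun i : Fin n => (g i.1 s)⁻¹)
            + f s • (L n).map (Complex.ofReal))⁻¹
          - ((n : ℂ)⁻¹ * ((n : ℂ)⁻¹ * ∑ i ∈ Finset.range n, (g i s)⁻¹)⁻¹) • allOnes n) ≤ ε := by
  obtain ⟨c, hc, hcf⟩ := hf
  have hclam : Tendsto (fun n => c * lam n) atTop atTop := hlam.const_mul_atTop hc
  obtain ⟨N, hN⟩ := ((hclam.eventually_gt_atTop (2 * M₂ * (1 + M₁ * M₂))).and
    (((tendsto_const_nhds (x := 2 * (1 + M₁ * M₂) ^ 2)).div_atTop hclam).eventually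
      (gt_mem_nhds hε)) |>.and (eventually_ge_atTop 2)).exists_forall_of_atTop
  refine ⟨N, fun n hn s hs => ?_⟩
  obtain ⟨⟨hκ, hCε⟩, hn2⟩ := hN n hn
  obtain ⟨hσ0, hσ⟩ := hgbar n (by omega) s hs
  rw [← Fin.sum_univ_eq_sum_range] at hσ0 hσ ⊢
  have hcoef : (n : ℂ)⁻¹ * ((n : ℂ)⁻¹ * ∑ i : Fin n, (g i s)⁻¹)⁻¹ =
      (∑ i : Fin n, (g i s)⁻¹)⁻¹ := by
    have : (n : ℂ) ≠ 0 := by exact_mod_cast (show n ≠ 0 by omega)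
    field_simp
  rw [hcoef]
  refine isUnit_and_norm_toEuclideanCLM_inv_sub_le hε.le fun x =>
    (norm_sub_toEuclideanCLM_le_of_laplacian (hL n hn2).1 (hL1 n hn2) (hgap n hn2) hM₂.le
      (fun i => hg i s hs) hσ0 ?_ hc.le (hcf s hs) hκ x).trans (by gcongr)
  simpa [mul_inv, mul_comm] using hσ

/-- Theorem 7 of the paper, coherence in growing networks. -/
theorem stmt_4 (g : ℕ → ℂ → ℂ) (f : ℂ → ℂ)
    (L : (n : ℕ) → Matrix (Fin n) (Fin n) ℝ) (lam : ℕ → ℝ)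
    (hL : ∀ n, 2 ≤ n → (L n).PosSemidef)
    (hL1 : ∀ n, 2 ≤ n → (L n).mulVec (fun _ => 1) = 0)
    (hlam0 : ∀ n, 2 ≤ n → 0 ≤ lam n)
    (hgap : ∀ n, 2 ≤ n → ∀ x : Fin n → ℂ, (∑ i, x i = 0) →
      lam n * ∑ i, ‖x i‖ ^ 2 ≤ (star x ⬝ᵥ ((L n).map (Complex.ofReal)).mulVec x).re)
    (hlam : Tendsto lam atTop atTop)
    (S : Set ℂ) (hS : IsCompact S)
    (M₂ : ℝ) (hM₂ : 0 < M₂) (hg : ∀ (i : ℕ), ∀ s ∈ S, ‖(g i s)⁻¹‖ ≤ M₂)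
    (M₁ : ℝ) (hM₁ : 0 < M₁)
    (hgbar : ∀ n : ℕ, 1 ≤ n → ∀ s ∈ S,
      (∑ i ∈ Finset.range n, (g i s)⁻¹ ≠ 0) ∧
      ‖((n : ℂ)⁻¹ * ∑ i ∈ Finset.range n, (g i s)⁻¹)⁻¹‖ ≤ M₁)
    (hf : ∃ c > 0, ∀ s ∈ S, c ≤ ‖f s‖)
    (ε : ℝ) (hε : 0 < ε) :
    ∃ N : ℕ, ∀ n, N ≤ n → ∀ s ∈ S,
      IsUnit (Matrix.diagonal (fun i : Fin n => (g i.1 s)⁻¹) + f s • (L n).map (Complex.ofReal)) ∧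
      specNorm ((Matrix.diagonal (fun i : Fin n => (g i.1 s)⁻¹)
            + f s • (L n).map (Complex.ofReal))⁻¹
          - ((n : ℂ)⁻¹ * ((n : ℂ)⁻¹ * ∑ i ∈ Finset.range n, (g i s)⁻¹)⁻¹) • allOnes n) ≤ ε :=
  stmt_4_general g f L lam hL hL1 hgap hlam S M₂ hM₂ hg M₁ hgbar hf ε hε
end

section
/- For all real α > 0 and K > 0, ∫₀^{Kα} α·√(α² + ω²)/√(4α⁴ + ω⁴) dω ≤ (√2/2)·α·(√2·arctan(K/√2) + log(1 + K²/2)). -/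
open Real

/-!
Since `a + b ≥ √(a² + b²) ≥ (a + b)/√2` for `a, b ≥ 0`, the integrand is dominated on `[0, Kα]`
by the rational function `√2 α (α + ω)/(2α² + ω²)`, whose antiderivative
`α arctan (ω/(√2 α)) + (√2/2) α log (2α² + ω²)` evaluates to the right-hand side.
-/

lemma sqrt_sq_add_sq_le_add {a b : ℝ} (ha : 0 ≤ a) (hb : 0 ≤ b) : √(a ^ 2 + b ^ 2) ≤ a + b := by
  rw [sqrt_le_left (by positivity)]
  nlinarith [mul_nonneg ha hb]

lemma add_le_sqrt_two_mul_sqrt_sq_add_sq (a b : ℝ) : a + b ≤ √2 * √(a ^ 2 + b ^ 2) := by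
  rw [← sqrt_mul zero_le_two]
  apply le_sqrt_of_sq_le
  nlinarith [sq_nonneg (a - b)]

lemma mul_sqrt_div_sqrt_le {α ω : ℝ} (hα : 0 < α) (hω : 0 ≤ ω) :
    α * √(α ^ 2 + ω ^ 2) / √(4 * α ^ 4 + ω ^ 4) ≤ √2 * α * (α + ω) / (2 * α ^ 2 + ω ^ 2) := by
  have hden : 2 * α ^ 2 + ω ^ 2 ≤ √2 * √(4 * α ^ 4 + ω ^ 4) := by
    convert add_le_sqrt_two_mul_sqrt_sq_add_sq (2 * α ^ 2) (ω ^ 2) using 3; ring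
  have hsqrt2 : (0 : ℝ) < √2 := by positivity
  calc α * √(α ^ 2 + ω ^ 2) / √(4 * α ^ 4 + ω ^ 4)
      ≤ α * (α + ω) / ((2 * α ^ 2 + ω ^ 2) / √2) := by
        gcongr
        · exact sqrt_sq_add_sq_le_add hα.le hω
        · rwa [div_le_iff₀' hsqrt2]
    _ = √2 * α * (α + ω) / (2 * α ^ 2 + ω ^ 2) := by field_simp

lemma hasDerivAt_arctan_add_log {α : ℝ} (hα : α ≠ 0) (ω : ℝ) :
    HasDerivAt (fun ω => α * arctan (ω / (√2 * α)) + √2 / 2 * α * log (2 * α ^ 2 + ω ^ 2))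
      (√2 * α * (α + ω) / (2 * α ^ 2 + ω ^ 2)) ω := by
  have hpos : 0 < 2 * α ^ 2 + ω ^ 2 := by positivity
  have harctan := (((hasDerivAt_id ω).div_const (√2 * α)).arctan).const_mul α
  have hlog := (((hasDerivAt_pow 2 ω).const_add (2 * α ^ 2)).log hpos.ne').const_mul (√2 / 2 * α)
  refine (harctan.add hlog).congr_deriv ?_
  have hsqrt2 : √2 ^ 2 = 2 := sq_sqrt zero_le_two
  field_simp
  simp only [hsqrt2, id, Nat.cast_ofNat]
  ring

lemma integral_sqrt_two_mul_add_div_two_mul_sq_add_sq {α : ℝ} (hα : α ≠ 0) (K : ℝ) :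
    ∫ ω in (0 : ℝ)..K * α, √2 * α * (α + ω) / (2 * α ^ 2 + ω ^ 2)
      = √2 / 2 * α * (√2 * arctan (K / √2) + log (1 + K ^ 2 / 2)) := by
  have hcont : Continuous fun ω : ℝ => √2 * α * (α + ω) / (2 * α ^ 2 + ω ^ 2) :=
    by fun_prop (disch := intro ω; positivity)
  rw [intervalIntegral.integral_eq_sub_of_hasDerivAt
    (fun ω _ => hasDerivAt_arctan_add_log hα ω) (hcont.intervalIntegrable _ _)]
  have harg : K * α / (√2 * α) = K / √2 := by field_simp
  have hlog : log (2 * α ^ 2 + (K * α) ^ 2) - log (2 * α ^ 2 + 0 ^ 2) = log (1 + K ^ 2 / 2) := by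
    rw [← log_div (by positivity) (by positivity)]
    congr 1
    field_simp
    ring
  have hsqrt2 : √2 ^ 2 = 2 := sq_sqrt zero_le_two
  simp only [harg, zero_div, arctan_zero, mul_zero]
  linear_combination √2 / 2 * α * hlog - arctan (K / √2) * α / 2 * hsqrt2

/-- bound on the low-frequency integral in the proof of Theorem 6. -/
theorem stmt_15 (α K : ℝ) (hα : 0 < α) (hK : 0 < K) :
    ∫ ω in (0:ℝ)..(K * α), α * Real.sqrt (α ^ 2 + ω ^ 2) / Real.sqrt (4 * α ^ 4 + ω ^ 4)
      ≤ (Real.sqrt 2 / 2) * α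
        * (Real.sqrt 2 * Real.arctan (K / Real.sqrt 2) + Real.log (1 + K ^ 2 / 2)) := by
  rw [← integral_sqrt_two_mul_add_div_two_mul_sq_add_sq hα.ne' K]
  refine intervalIntegral.integral_mono_on (by positivity) ?_ ?_
    fun ω hω => mul_sqrt_div_sqrt_le hα hω.1
  all_goals
    exact (Continuous.continuousOn (by fun_prop (disch := intro ω; positivity))).intervalIntegrable
end
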